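/- Let ζ₊ ∈ ℂ² be a nonzero Majorana spinor. Then for every Majorana spinor ζ₋ ∈ ℂ² there exist unique λ₁, λ₂ ∈ ℝ such that ζ₋ = (1/√2)·( λ₁·σ₂ − λ₂·σ₁ )·ζ₊. (In gamma-matrix language, ζ₋ = (1/√2)·λ^a·γ_{a0}·ζ₊ with γ_{a0} = ½[γ_a, γ₀]; this is the statement that the local Galilean boost gauge freedom can be completely fixed by setting ζ₋ = 0 whenever ζ₊ ≠ 0.) -/

import Mathlib

open Matrix Complex

noncomputable section

/-- Pauli matrix σ₁. -/
def σ1 : Matrix (Fin 2) (Fin 2) ℂ := !![0, 1; 1, 0]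
/-- Pauli matrix σ₂. -/
def σ2 : Matrix (Fin 2) (Fin 2) ℂ := !![0, -I; I, 0]

/-- A spinor ζ ∈ ℂ² is Majorana if conj(ζ) = i σ₁ ζ componentwise. -/
def IsMajorana (ζ : Fin 2 → ℂ) : Prop := star ζ = (I • σ1).mulVec ζ

/-!
A Majorana spinor is determined by its first component `a`, being `(a, -i ā)`, so the Majorana
spinors form a copy of `ℂ` over `ℝ`. In this picture `(λ₁σ₂ − λ₂σ₁)` sends `(a, -i ā)` to the
Majorana spinor with first component `(-λ₁ + λ₂ i) ā`. For `a ≠ 0` the map `λ ↦ (-λ₁ + λ₂ i) ā / √2`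
is a real-linear bijection `ℝ² → ℂ`, which gives existence and uniqueness at once.
-/

open ComplexConjugate

lemma σ1_mulVec (ζ : Fin 2 → ℂ) : σ1 *ᵥ ζ = ![ζ 1, ζ 0] := by
  ext i; fin_cases i <;> simp [σ1, mulVec, dotProduct, Fin.sum_univ_two]

lemma σ2_mulVec (ζ : Fin 2 → ℂ) : σ2 *ᵥ ζ = ![-I * ζ 1, I * ζ 0] := by
  ext i; fin_cases i <;> simp [σ2, mulVec, dotProduct, Fin.sum_univ_two]

lemma isMajorana_iff {ζ : Fin 2 → ℂ} :
    IsMajorana ζ ↔ conj (ζ 0) = I * ζ 1 ∧ conj (ζ 1) = I * ζ 0 := by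
  rw [IsMajorana, smul_mulVec, σ1_mulVec, funext_iff, Fin.forall_fin_two]
  simp

def majoranaOf (a : ℂ) : Fin 2 → ℂ := ![a, -I * conj a]

lemma majoranaOf_injective : Function.Injective majoranaOf :=
  fun a b h => by simpa [majoranaOf] using congrFun h 0

lemma majoranaOf_zero : majoranaOf 0 = 0 := by
  ext i; fin_cases i <;> simp [majoranaOf]

lemma isMajorana_iff_mem_range {ζ : Fin 2 → ℂ} : IsMajorana ζ ↔ ζ ∈ Set.range majoranaOf := by
  rw [isMajorana_iff]
  constructor
  · rintro ⟨-, h⟩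
    refine ⟨ζ 0, ?_⟩
    ext i; fin_cases i
    · rfl
    · simpa [majoranaOf] using congrArg conj h.symm
  · rintro ⟨a, rfl⟩
    simp only [majoranaOf, cons_val_zero, cons_val_one, cons_val_fin_one, map_mul, map_neg, conj_I,
      conj_conj]
    exact ⟨by linear_combination conj a * I_sq, by ring⟩

lemma ofReal_smul_majoranaOf (r : ℝ) (a : ℂ) : (r : ℂ) • majoranaOf a = majoranaOf (r * a) := by
  rw [majoranaOf, majoranaOf, smul_vec2, smul_eq_mul, smul_eq_mul, map_mul, conj_ofReal,
    mul_left_comm]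

def boostCoeff (l : ℝ × ℝ) : ℂ := -l.1 + l.2 * I

lemma boostCoeff_bijective : Function.Bijective boostCoeff :=
  Function.bijective_iff_has_inverse.2
    ⟨fun z => (-z.re, z.im), fun l => by simp [boostCoeff],
      fun z => by apply Complex.ext <;> simp [boostCoeff]⟩

lemma boost_mulVec_majoranaOf (l : ℝ × ℝ) (a : ℂ) :
    ((l.1 : ℂ) • σ2 - (l.2 : ℂ) • σ1) *ᵥ majoranaOf a = majoranaOf (boostCoeff l * conj a) := by
  rw [sub_mulVec, smul_mulVec, smul_mulVec, σ1_mulVec, σ2_mulVec]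
  simp only [funext_iff, Fin.forall_fin_two, majoranaOf, boostCoeff, Pi.sub_apply, Pi.smul_apply,
    smul_eq_mul, cons_val_zero, cons_val_one, cons_val_fin_one, map_mul, map_add, map_neg,
    conj_ofReal, conj_I, conj_conj]
  exact ⟨by linear_combination (l.1 * conj a) * I_sq, by linear_combination (-l.2 * a) * I_sq⟩

/-- Let ζ₊ be a nonzero Majorana spinor. Then every Majorana spinor ζ₋ can be written
uniquely as ζ₋ = (1/√2)(λ₁σ₂ − λ₂σ₁)ζ₊ with λ₁, λ₂ ∈ ℝ: the Galilean boost gauge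
freedom can be completely fixed by setting ζ₋ = 0 whenever ζ₊ ≠ 0. -/
theorem boost_gauge_fixing (ζp : Fin 2 → ℂ) (hζp : ζp ≠ 0) (hM : IsMajorana ζp) :
    ∀ ζm : Fin 2 → ℂ, IsMajorana ζm →
      ∃! l : ℝ × ℝ, ζm = ((Real.sqrt 2 : ℂ))⁻¹ •
        (((l.1 : ℂ) • σ2 - (l.2 : ℂ) • σ1).mulVec ζp) := by
  intro ζm hMm
  obtain ⟨a, rfl⟩ := isMajorana_iff_mem_range.1 hM
  obtain ⟨b, rfl⟩ := isMajorana_iff_mem_range.1 hMm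
  have ha : conj a ≠ 0 := by
    rw [map_ne_zero]
    rintro rfl
    exact hζp majoranaOf_zero
  have hsqrt2 : (Real.sqrt 2 : ℂ) ≠ 0 := by norm_num
  have key (l : ℝ × ℝ) : majoranaOf b = ((Real.sqrt 2 : ℂ))⁻¹ •
      (((l.1 : ℂ) • σ2 - (l.2 : ℂ) • σ1).mulVec (majoranaOf a)) ↔
      boostCoeff l = Real.sqrt 2 * b / conj a := by
    rw [boost_mulVec_majoranaOf, ← ofReal_inv, ofReal_smul_majoranaOf, majoranaOf_injective.eq_iff,
      ofReal_inv, eq_inv_mul_iff_mul_eq₀ hsqrt2, eq_div_iff ha, eq_comm]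
  simp_rw [key]
  exact boostCoeff_bijective.existsUnique _
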